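/- Let φ, f, h : (0,∞) → ℝ be smooth functions. For x ∈ ℝ² \ {0} write r = |x|, ν = x/r, τ = x^⊥/r with x^⊥ = (-x₂,x₁), and define u(x) = φ(r) x₁/r and the symmetric matrix field M(x) = f(r) ν⊗ν + h(r) τ⊗τ. Then for every x ≠ 0, ½ ∇u(x)·x - div(M ∇u)(x) = E(r) x₁/r, where E(r) = ½ r φ'(r) + h(r) φ(r)/r² - (r φ'(r) f(r))'/r. -/

import Mathlib

open MeasureTheory Filter Set

noncomputable section

/-- Euclidean space `ℝⁿ`. -/
abbrev E (n : ℕ) : Type := EuclideanSpace ℝ (Fin n)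

/-- The `i`-th coordinate direction. -/
def es {n : ℕ} (i : Fin n) : E n := EuclideanSpace.single i 1

/-- The partial derivative `∂ᵢ f (x)`. -/
def pd {n : ℕ} (i : Fin n) (f : E n → ℝ) (x : E n) : ℝ := fderiv ℝ f x (es i)

/-- The scalar building block `u = φ(r) cos θ`, i.e. `u(x) = φ(|x|) x₁/|x|`. -/
def ublock (φ : ℝ → ℝ) (x : E 2) : ℝ := φ ‖x‖ * (x 0 / ‖x‖)

/-- The entries of the matrix field `M = f(r) ν⊗ν + h(r) τ⊗τ`, where `ν = x/r` and
`τ = x^⊥/r` with `x^⊥ = (-x₂,x₁)`. -/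
def Mblock (f h : ℝ → ℝ) (y : E 2) (i j : Fin 2) : ℝ :=
  f ‖y‖ * (y i / ‖y‖) * (y j / ‖y‖) +
    h ‖y‖ * ((![-(y 1), y 0] : Fin 2 → ℝ) i / ‖y‖) * ((![-(y 1), y 0] : Fin 2 → ℝ) j / ‖y‖)

/-! ### Auxiliary lemmas -/

lemma normE2 (y : E 2) : ‖y‖ = Real.sqrt (y 0 ^ 2 + y 1 ^ 2) := by
  rw [EuclideanSpace.norm_eq]
  simp [Fin.sum_univ_two, Real.norm_eq_abs, sq_abs]

lemma qpos (y : E 2) (hy : y ≠ 0) : 0 < y 0 ^ 2 + y 1 ^ 2 := by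
  have h := norm_pos_iff.mpr hy
  rw [normE2] at h
  exact Real.sqrt_pos.mp h

lemma sq_normE2 (y : E 2) : y 0 ^ 2 + y 1 ^ 2 = ‖y‖ ^ 2 := by
  rw [normE2, Real.sq_sqrt]; positivity

lemma hcoord (i : Fin 2) (y : E 2) :
    HasFDerivAt (fun z : E 2 => z i) (EuclideanSpace.proj (𝕜 := ℝ) i) y :=
  (EuclideanSpace.proj (𝕜 := ℝ) i).hasFDerivAt

/-- The derivative of the norm, as a continuous linear map. -/
def Nc (y : E 2) : E 2 →L[ℝ] ℝ :=
  ‖y‖⁻¹ • ((y 0) • EuclideanSpace.proj (𝕜 := ℝ) (0 : Fin 2) +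
    (y 1) • EuclideanSpace.proj (𝕜 := ℝ) (1 : Fin 2))

lemma Nc_apply (y v : E 2) : Nc y v = ‖y‖⁻¹ * (y 0 * v 0 + y 1 * v 1) := by
  simp [Nc, mul_add]

lemma es_apply (i j : Fin 2) : (es j : E 2) i = if i = j then 1 else 0 := by
  simp [es, EuclideanSpace.single_apply]

lemma hasFDerivAt_norm2 (y : E 2) (hy : y ≠ 0) :
    HasFDerivAt (fun z : E 2 => ‖z‖) (Nc y) y := by
  have h0 := hcoord 0 y
  have h1 := hcoord 1 y
  have hq : HasFDerivAt (fun z : E 2 => z 0 ^ 2 + z 1 ^ 2)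
      ((y 0 • EuclideanSpace.proj (𝕜 := ℝ) (0:Fin 2) + y 0 • EuclideanSpace.proj (𝕜 := ℝ) (0:Fin 2)) +
       (y 1 • EuclideanSpace.proj (𝕜 := ℝ) (1:Fin 2) + y 1 • EuclideanSpace.proj (𝕜 := ℝ) (1:Fin 2))) y := by
    simp only [pow_two]; exact (h0.mul h0).add (h1.mul h1)
  have hs := hq.sqrt (ne_of_gt (qpos y hy))
  have heq : (fun z : E 2 => Real.sqrt (z 0 ^ 2 + z 1 ^ 2)) = fun z : E 2 => ‖z‖ :=
    funext fun z => (normE2 z).symm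
  rw [heq] at hs
  refine hs.congr_fderiv ?_
  rw [Nc, normE2 y]
  module

/-- Derivative of `z ↦ g(‖z‖) z_i`. -/
lemma shape1 (g : ℝ → ℝ) (i : Fin 2) (y : E 2) (hy : y ≠ 0)
    (hg : DifferentiableAt ℝ g ‖y‖) :
    HasFDerivAt (fun z : E 2 => g ‖z‖ * z i)
      ((deriv g ‖y‖ * y i) • Nc y + g ‖y‖ • EuclideanSpace.proj (𝕜 := ℝ) i) y := by
  have hgr : HasFDerivAt (fun z : E 2 => g ‖z‖) (deriv g ‖y‖ • Nc y) y :=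
    hg.hasDerivAt.comp_hasFDerivAt y (hasFDerivAt_norm2 y hy)
  refine (hgr.mul (hcoord i y)).congr_fderiv ?_
  module

/-- Derivative of `z ↦ g(‖z‖) z_i z_j`. -/
lemma shape2 (g : ℝ → ℝ) (i j : Fin 2) (y : E 2) (hy : y ≠ 0)
    (hg : DifferentiableAt ℝ g ‖y‖) :
    HasFDerivAt (fun z : E 2 => g ‖z‖ * z i * z j)
      ((deriv g ‖y‖ * y i * y j) • Nc y + (g ‖y‖ * y j) • EuclideanSpace.proj (𝕜 := ℝ) i +
        (g ‖y‖ * y i) • EuclideanSpace.proj (𝕜 := ℝ) j) y := by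
  refine ((shape1 g i y hy hg).mul (hcoord j y)).congr_fderiv ?_
  module

def Phi (φ : ℝ → ℝ) : ℝ → ℝ := fun s => φ s / s
def A2 (f φ : ℝ → ℝ) : ℝ → ℝ := fun s => f s * deriv φ s / s ^ 2
def B3 (h φ : ℝ → ℝ) : ℝ → ℝ := fun s => h s * φ s / s ^ 3

lemma Phi_deriv (φ : ℝ → ℝ) {s : ℝ} (hφd : DifferentiableAt ℝ φ s) (hs : s ≠ 0) :
    deriv (Phi φ) s = (deriv φ s * s - φ s) / s ^ 2 := by
  unfold Phi
  rw [deriv_fun_div (d := fun y => y) hφd differentiableAt_id hs]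
  simp

lemma A2_deriv (f φ : ℝ → ℝ) {s : ℝ} (hfd : DifferentiableAt ℝ f s)
    (hφ'd : DifferentiableAt ℝ (deriv φ) s) (hs : s ≠ 0) :
    deriv (A2 f φ) s =
      ((deriv f s * deriv φ s + f s * deriv (deriv φ) s) * s ^ 2 -
        f s * deriv φ s * (2 * s)) / s ^ 4 := by
  unfold A2
  rw [deriv_fun_div (c := fun y => f y * deriv φ y) (hfd.mul hφ'd : DifferentiableAt ℝ (fun y => f y * deriv φ y) s) (differentiableAt_pow 2) (pow_ne_zero 2 hs),
    deriv_fun_mul hfd hφ'd, deriv_pow_field 2]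
  ring_nf

lemma B3_deriv (h φ : ℝ → ℝ) {s : ℝ} (hhd : DifferentiableAt ℝ h s)
    (hφd : DifferentiableAt ℝ φ s) (hs : s ≠ 0) :
    deriv (B3 h φ) s =
      ((deriv h s * φ s + h s * deriv φ s) * s ^ 3 - h s * φ s * (3 * s ^ 2)) / s ^ 6 := by
  unfold B3
  rw [deriv_fun_div (c := fun y => h y * φ y) (hhd.mul hφd : DifferentiableAt ℝ (fun y => h y * φ y) s) (differentiableAt_pow 3) (pow_ne_zero 3 hs),
    deriv_fun_mul hhd hφd, deriv_pow_field 3]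
  ring_nf

set_option maxHeartbeats 2000000 in
/-- **The radial error of the scalar building block.** For smooth `φ, f, h` on `(0,∞)`,
`u = φ(r) cos θ` and `M = f(r) ν⊗ν + h(r) τ⊗τ`, one has for every `x ≠ 0`
`½ ∇u·x - div(M ∇u) = E(r) cos θ`, where
`E(r) = ½ r φ' + h φ/r² - (r φ' f)'/r`. -/
theorem scalar_building_block_error (φ f h : ℝ → ℝ)
    (hφ : ContDiffOn ℝ (⊤ : ℕ∞) φ (Ioi 0))
    (hf : ContDiffOn ℝ (⊤ : ℕ∞) f (Ioi 0))
    (hh : ContDiffOn ℝ (⊤ : ℕ∞) h (Ioi 0)) :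
    ∀ x : E 2, x ≠ 0 →
      (1 / 2) * fderiv ℝ (ublock φ) x x -
          (∑ i, pd i (fun y => ∑ j, Mblock f h y i j * pd j (ublock φ) y) x) =
        ((1 / 2) * ‖x‖ * deriv φ ‖x‖ + h ‖x‖ * φ ‖x‖ / ‖x‖ ^ 2 -
            deriv (fun s => s * deriv φ s * f s) ‖x‖ / ‖x‖) * (x 0 / ‖x‖) := by
  have dAt : ∀ (g : ℝ → ℝ), ContDiffOn ℝ (⊤ : ℕ∞) g (Ioi 0) → ∀ s : ℝ, 0 < s →
      DifferentiableAt ℝ g s := fun g hg s hs =>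
    (hg.contDiffAt (Ioi_mem_nhds hs)).differentiableAt (by simp)
  have hφ' : ContDiffOn ℝ (⊤ : ℕ∞) (deriv φ) (Ioi 0) := hφ.deriv_of_isOpen isOpen_Ioi (by simp)
  -- differentiability of the radial profiles
  have hΦd : ∀ s : ℝ, 0 < s → DifferentiableAt ℝ (Phi φ) s := fun s hs =>
    (dAt φ hφ s hs).div differentiableAt_id (ne_of_gt hs)
  have hA2d : ∀ s : ℝ, 0 < s → DifferentiableAt ℝ (A2 f φ) s := fun s hs =>
    ((dAt f hf s hs).mul (dAt (deriv φ) hφ' s hs)).div (differentiableAt_pow 2)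
      (pow_ne_zero 2 (ne_of_gt hs))
  have hB3d : ∀ s : ℝ, 0 < s → DifferentiableAt ℝ (B3 h φ) s := fun s hs =>
    ((dAt h hh s hs).mul (dAt φ hφ s hs)).div (differentiableAt_pow 3)
      (pow_ne_zero 3 (ne_of_gt hs))
  -- rewriting ublock
  have hu : ublock φ = fun z : E 2 => Phi φ ‖z‖ * z 0 := by
    funext z
    simp only [ublock, Phi]
    ring
  -- derivative of ublock at any nonzero point
  have hU : ∀ y : E 2, y ≠ 0 →
      HasFDerivAt (ublock φ)
        ((deriv (Phi φ) ‖y‖ * y 0) • Nc y + Phi φ ‖y‖ • EuclideanSpace.proj (𝕜 := ℝ) (0 : Fin 2)) y := by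
    intro y hy
    rw [hu]
    exact shape1 (Phi φ) 0 y hy (hΦd ‖y‖ (norm_pos_iff.mpr hy))
  have pdu0 : ∀ y : E 2, y ≠ 0 →
      pd 0 (ublock φ) y = (deriv (Phi φ) ‖y‖ * y 0) * (‖y‖⁻¹ * y 0) + Phi φ ‖y‖ := by
    intro y hy
    simp only [pd, (hU y hy).fderiv, ContinuousLinearMap.add_apply,
      ContinuousLinearMap.smul_apply, Nc_apply, smul_eq_mul]
    simp [es_apply]
  have pdu1 : ∀ y : E 2, y ≠ 0 →
      pd 1 (ublock φ) y = (deriv (Phi φ) ‖y‖ * y 0) * (‖y‖⁻¹ * y 1) := by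
    intro y hy
    simp only [pd, (hU y hy).fderiv, ContinuousLinearMap.add_apply,
      ContinuousLinearMap.smul_apply, Nc_apply, smul_eq_mul]
    simp [es_apply]
  -- the explicit form of the flux components
  have hW0 : ∀ y : E 2, y ≠ 0 →
      (∑ j, Mblock f h y 0 j * pd j (ublock φ) y) =
        A2 f φ ‖y‖ * y 0 * y 0 + B3 h φ ‖y‖ * y 1 * y 1 := by
    intro y hy
    have hR : (0:ℝ) < ‖y‖ := norm_pos_iff.mpr hy
    have hRne : ‖y‖ ≠ 0 := ne_of_gt hR
    have h2 := sq_normE2 y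
    rw [Fin.sum_univ_two, pdu0 y hy, pdu1 y hy, Phi_deriv φ (dAt φ hφ ‖y‖ hR) hRne]
    simp only [Mblock, A2, B3, Phi, Matrix.cons_val_zero, Matrix.cons_val_one, Matrix.head_cons]
    field_simp
    linear_combination (f ‖y‖ * (y 0) ^ 2 * (‖y‖ * deriv φ ‖y‖ - φ ‖y‖)) * h2
  have hW1 : ∀ y : E 2, y ≠ 0 →
      (∑ j, Mblock f h y 1 j * pd j (ublock φ) y) =
        A2 f φ ‖y‖ * y 0 * y 1 - B3 h φ ‖y‖ * y 0 * y 1 := by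
    intro y hy
    have hR : (0:ℝ) < ‖y‖ := norm_pos_iff.mpr hy
    have hRne : ‖y‖ ≠ 0 := ne_of_gt hR
    have h2 := sq_normE2 y
    rw [Fin.sum_univ_two, pdu0 y hy, pdu1 y hy, Phi_deriv φ (dAt φ hφ ‖y‖ hR) hRne]
    simp only [Mblock, A2, B3, Phi, Matrix.cons_val_zero, Matrix.cons_val_one, Matrix.head_cons]
    field_simp
    linear_combination (y 0 * y 1 * f ‖y‖ * (‖y‖ * deriv φ ‖y‖ - φ ‖y‖)) * h2
  intro x hx
  have hR : (0:ℝ) < ‖x‖ := norm_pos_iff.mpr hx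
  have hRne : ‖x‖ ≠ 0 := ne_of_gt hR
  have hmem : {y : E 2 | y ≠ 0} ∈ nhds x := by
    have : IsOpen {y : E 2 | y ≠ 0} := isOpen_compl_singleton
    exact this.mem_nhds hx
  -- derivatives of the explicit flux components
  have hWd0 : HasFDerivAt (fun z : E 2 => A2 f φ ‖z‖ * z 0 * z 0 + B3 h φ ‖z‖ * z 1 * z 1)
      (((deriv (A2 f φ) ‖x‖ * x 0 * x 0) • Nc x + (A2 f φ ‖x‖ * x 0) • EuclideanSpace.proj (𝕜 := ℝ) (0:Fin 2) +
        (A2 f φ ‖x‖ * x 0) • EuclideanSpace.proj (𝕜 := ℝ) (0:Fin 2)) +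
       ((deriv (B3 h φ) ‖x‖ * x 1 * x 1) • Nc x + (B3 h φ ‖x‖ * x 1) • EuclideanSpace.proj (𝕜 := ℝ) (1:Fin 2) +
        (B3 h φ ‖x‖ * x 1) • EuclideanSpace.proj (𝕜 := ℝ) (1:Fin 2))) x :=
    (shape2 (A2 f φ) 0 0 x hx (hA2d ‖x‖ hR)).add (shape2 (B3 h φ) 1 1 x hx (hB3d ‖x‖ hR))
  have hWd1 : HasFDerivAt (fun z : E 2 => A2 f φ ‖z‖ * z 0 * z 1 - B3 h φ ‖z‖ * z 0 * z 1)
      (((deriv (A2 f φ) ‖x‖ * x 0 * x 1) • Nc x + (A2 f φ ‖x‖ * x 1) • EuclideanSpace.proj (𝕜 := ℝ) (0:Fin 2) +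
        (A2 f φ ‖x‖ * x 0) • EuclideanSpace.proj (𝕜 := ℝ) (1:Fin 2)) -
       ((deriv (B3 h φ) ‖x‖ * x 0 * x 1) • Nc x + (B3 h φ ‖x‖ * x 1) • EuclideanSpace.proj (𝕜 := ℝ) (0:Fin 2) +
        (B3 h φ ‖x‖ * x 0) • EuclideanSpace.proj (𝕜 := ℝ) (1:Fin 2))) x :=
    (shape2 (A2 f φ) 0 1 x hx (hA2d ‖x‖ hR)).sub (shape2 (B3 h φ) 0 1 x hx (hB3d ‖x‖ hR))
  have hp0 : pd 0 (fun y => ∑ j, Mblock f h y 0 j * pd j (ublock φ) y) x =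
      (deriv (A2 f φ) ‖x‖ * x 0 * x 0) * (‖x‖⁻¹ * x 0) + A2 f φ ‖x‖ * x 0 + A2 f φ ‖x‖ * x 0 +
        (deriv (B3 h φ) ‖x‖ * x 1 * x 1) * (‖x‖⁻¹ * x 0) := by
    have hev : (fun y => ∑ j, Mblock f h y 0 j * pd j (ublock φ) y) =ᶠ[nhds x]
        (fun z : E 2 => A2 f φ ‖z‖ * z 0 * z 0 + B3 h φ ‖z‖ * z 1 * z 1) :=
      eventually_of_mem hmem fun y hy => hW0 y hy
    rw [pd, hev.fderiv_eq, hWd0.fderiv]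
    simp only [ContinuousLinearMap.add_apply, ContinuousLinearMap.smul_apply, Nc_apply,
      smul_eq_mul]
    simp [es_apply]
  have hp1 : pd 1 (fun y => ∑ j, Mblock f h y 1 j * pd j (ublock φ) y) x =
      ((deriv (A2 f φ) ‖x‖ * x 0 * x 1) * (‖x‖⁻¹ * x 1) + A2 f φ ‖x‖ * x 0) -
        ((deriv (B3 h φ) ‖x‖ * x 0 * x 1) * (‖x‖⁻¹ * x 1) + B3 h φ ‖x‖ * x 0) := by
    have hev : (fun y => ∑ j, Mblock f h y 1 j * pd j (ublock φ) y) =ᶠ[nhds x]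
        (fun z : E 2 => A2 f φ ‖z‖ * z 0 * z 1 - B3 h φ ‖z‖ * z 0 * z 1) :=
      eventually_of_mem hmem fun y hy => hW1 y hy
    rw [pd, hev.fderiv_eq, hWd1.fderiv]
    simp only [ContinuousLinearMap.sub_apply, ContinuousLinearMap.add_apply,
      ContinuousLinearMap.smul_apply, Nc_apply, smul_eq_mul]
    simp [es_apply]
  have hfdu : fderiv ℝ (ublock φ) x x =
      (deriv (Phi φ) ‖x‖ * x 0) * (‖x‖⁻¹ * (x 0 * x 0 + x 1 * x 1)) + Phi φ ‖x‖ * x 0 := by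
    rw [(hU x hx).fderiv]
    simp only [ContinuousLinearMap.add_apply, ContinuousLinearMap.smul_apply, Nc_apply,
      smul_eq_mul]
    simp
  have hD : deriv (fun s => s * deriv φ s * f s) ‖x‖ =
      (1 * deriv φ ‖x‖ + ‖x‖ * deriv (deriv φ) ‖x‖) * f ‖x‖ +
        ‖x‖ * deriv φ ‖x‖ * deriv f ‖x‖ :=
    (((hasDerivAt_id ‖x‖).mul (dAt (deriv φ) hφ' ‖x‖ hR).hasDerivAt).mul
      (dAt f hf ‖x‖ hR).hasDerivAt).deriv
  rw [Fin.sum_univ_two, hp0, hp1, hfdu, hD,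
    Phi_deriv φ (dAt φ hφ ‖x‖ hR) hRne,
    A2_deriv f φ (dAt f hf ‖x‖ hR) (dAt (deriv φ) hφ' ‖x‖ hR) hRne,
    B3_deriv h φ (dAt h hh ‖x‖ hR) (dAt φ hφ ‖x‖ hR) hRne]
  simp only [A2, B3, Phi]
  have h2 := sq_normE2 x
  field_simp
  linear_combination (x 0 * (4 * ‖x‖ * deriv φ ‖x‖ * f ‖x‖ - 2 * ‖x‖ ^ 2 * deriv φ ‖x‖ * deriv f ‖x‖ - ‖x‖ ^ 2 * φ ‖x‖ - 2 * ‖x‖ ^ 2 * f ‖x‖ * deriv (deriv φ) ‖x‖ + ‖x‖ ^ 3 * deriv φ ‖x‖)) * h2
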